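/- arXiv:1907.04935 — 3 statements merged into one kernel-verified Lean document; each statement's English description precedes it below -/
import Mathlib

section
/- Define the sequence of sets V_0 = S and V_{k+1} = PreInt^f(V_k, S) for k ≥ 0. If the fixed point is reached at some K, i.e., V_{K+1} = V_K, then V_K equals Inv^f(S): V_K is a controlled invariant set within S, and every controlled invariant set within S is contained in V_K. -/
/-- One-step controlled predecessor of `V` with respect to the set-valued
dynamics `f : X → U → Set X`. -/
def PreOp {X U : Type*} (f : X → U → Set X) (V : Set X) : Set X :=
  {x | ∃ u : U, f x u ⊆ V}

/-- One-step constrained controlled predecessor. -/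
def PreInt {X U : Type*} (f : X → U → Set X) (V S : Set X) : Set X :=
  PreOp f V ∩ S

/-- `C` is a controlled invariant set within the safe set `S`. -/
def IsCtrlInv {X U : Type*} (f : X → U → Set X) (S C : Set X) : Prop :=
  C ⊆ S ∧ ∀ x ∈ C, ∃ u : U, f x u ⊆ C

/-- The maximal controlled invariant set within `S`: the union of all
controlled invariant sets within `S`. -/
def maxInv {X U : Type*} (f : X → U → Set X) (S : Set X) : Set X :=
  ⋃₀ {C | IsCtrlInv f S C}

/-- if the fixed-point iteration `V_0 = S`,
`V_{k+1} = PreInt^f(V_k, S)` reaches a fixed point at `K` (i.e.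
`V_{K+1} = V_K`), then `V_K` is a controlled invariant set within `S`, every
controlled invariant set within `S` is contained in `V_K`, and `V_K` equals the
maximal controlled invariant set `Inv^f(S)`. -/
theorem fixedPoint_eq_maxInv {X U : Type*} (f : X → U → Set X) (S : Set X)
    (V : ℕ → Set X) (hV0 : V 0 = S)
    (hVs : ∀ k : ℕ, V (k + 1) = PreInt f (V k) S)
    (K : ℕ) (hK : V (K + 1) = V K) :
    IsCtrlInv f S (V K) ∧
    (∀ C : Set X, IsCtrlInv f S C → C ⊆ V K) ∧
    V K = maxInv f S := by
  have hsub : V K ⊆ S := by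
    rw [← hK, hVs K]; exact Set.inter_subset_right
  have hinv : IsCtrlInv f S (V K) := by
    refine ⟨hsub, fun x hx => ?_⟩
    rw [← hK, hVs K] at hx
    exact hx.1
  have hmax : ∀ C : Set X, IsCtrlInv f S C → C ⊆ V K := by
    intro C hC
    have : ∀ k, C ⊆ V k := by
      intro k
      induction k with
      | zero => rw [hV0]; exact hC.1
      | succ k ih =>
        rw [hVs k]
        intro x hx
        obtain ⟨u, hu⟩ := hC.2 x hx
        exact ⟨⟨u, hu.trans ih⟩, hC.1 hx⟩
    exact this K
  refine ⟨hinv, hmax, ?_⟩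
  apply Set.Subset.antisymm
  · exact Set.subset_sUnion_of_mem hinv
  · exact Set.sUnion_subset fun C hC => hmax C hC
end

section
/- (Theorem 1) Let G = (Q, E, T, H) and Ĝ = (Q, E, T̂, H) be two preview automata for the same switched system Σ with s modes, where T̂(q1,q2) = min(T(q1,q2)) (so each preview time interval of Ĝ is the singleton consisting of the lower endpoint of the corresponding interval of G). Then, given a safety specification (S_i)_{i ∈ Q}, a collection (W_i)_{i ∈ Q} is a winning set with respect to G if and only if (W_i)_{i ∈ Q} is a winning set with respect to Ĝ. -/
open scoped Classical

/-- A preview automaton `G = (Q, E, T, H)`: transitions `E` (no self-loops),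
a nonempty interval `T(q₁,q₂) ⊆ ℕ` of possible preview times for each
transition (possibly unbounded on the right), and a least holding time
`H(q) ∈ {1,2,…} ∪ {∞}` for each node, with `H(q) = ∞` exactly for the sink
states (nodes with no outgoing transition). -/
structure PreviewAutomaton (Q : Type*) where
  E : Q → Q → Prop
  T : Q → Q → Set ℕ
  H : Q → ℕ∞
  no_self_loop : ∀ q, ¬ E q q
  T_interval : ∀ q1 q2, E q1 q2 →
    ∃ (t1 : ℕ) (t2 : ℕ∞), (t1 : ℕ∞) ≤ t2 ∧
      T q1 q2 = {τ : ℕ | t1 ≤ τ ∧ (τ : ℕ∞) ≤ t2}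
  H_pos : ∀ q, 1 ≤ H q
  H_sink : ∀ q, (H q = ⊤ ↔ ∀ p, ¬ E q p)

/-- `(t_k, τ_k, d_k)_{1 ≤ k ≤ N}` (as functions on `ℕ`, with `N ≤ ∞`; values
beyond `N` are irrelevant) is a valid preview input sequence of `A` from the
initial node `q0`: with `(t_0, τ_0, d_0) = (0, 0, q0)`, for all `1 ≤ k ≤ N`,
(1) `t_{k−1} + τ_{k−1} ≤ t_k`, (2) `(d_{k−1}, d_k) ∈ E` and
`τ_k ∈ T(d_{k−1}, d_k)`, and (3)
`(t_k + τ_k − 1) − (t_{k−1} + τ_{k−1}) ≥ H(d_{k−1})`. -/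
def ValidInput {Q : Type*} (A : PreviewAutomaton Q) (q0 : Q) (N : ℕ∞)
    (t τ : ℕ → ℕ) (d : ℕ → Q) : Prop :=
  t 0 = 0 ∧ τ 0 = 0 ∧ d 0 = q0 ∧
  ∀ k : ℕ, 1 ≤ k → (k : ℕ∞) ≤ N →
    t (k - 1) + τ (k - 1) ≤ t k ∧
    A.E (d (k - 1)) (d k) ∧ τ k ∈ A.T (d (k - 1)) (d k) ∧
    A.H (d (k - 1)) ≤ ((t k + τ k - 1 - (t (k - 1) + τ (k - 1)) : ℕ) : ℕ∞)

/-- `q : ℕ → Q` is the execution corresponding to the preview input sequence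
`(t_k, τ_k, d_k)_{k ≤ N}`: `q(s) = d_k` on the interval
`I_k = [t_k + τ_k, t_{k+1} + τ_{k+1} − 1]` (unbounded on the right for
`k = N` when `N < ∞`). -/
def IsExecution {Q : Type*} (N : ℕ∞) (t τ : ℕ → ℕ) (d : ℕ → Q)
    (q : ℕ → Q) : Prop :=
  ∀ s k : ℕ, (k : ℕ∞) ≤ N → t k + τ k ≤ s →
    ((k : ℕ∞) + 1 ≤ N → s < t (k + 1) + τ (k + 1)) → q s = d k

/-- A controller maps, for each time `t*`, the partial run
`(q(0), x(0)), …, (q(t*), x(t*))` together with the preview inputs received up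
to time `t*` to a control input in `U`. -/
def Controller (Q X U : Type*) : Type _ :=
  (tstar : ℕ) → (Fin (tstar + 1) → Q × X) → (ℕ → Option (ℕ × ℕ × Q)) → U

/-- The preview inputs `(t_k, τ_k, d_k)` with `1 ≤ k ≤ N` received up to time
`t*` (indexed by `k`; `none` for previews not yet received). -/
def PreviewObs {Q : Type*} (N : ℕ∞) (t τ : ℕ → ℕ) (d : ℕ → Q)
    (tstar : ℕ) : ℕ → Option (ℕ × ℕ × Q) :=
  fun k => if 1 ≤ k ∧ (k : ℕ∞) ≤ N ∧ t k ≤ tstar then some (t k, τ k, d k)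
    else none

/-- `(q, x)` is a closed-loop run of the switched system `f` with preview
automaton `A` from initial node `q0`, under controller `𝒰` and the valid
preview input sequence `(N, t, τ, d)`: `q` is the corresponding execution and
`x(s+1) ∈ f_{q(s)}(x(s), u(s))` where `u(s)` is the controller output given
the partial run and the previews received up to time `s`. -/
def IsClosedLoopRun {Q X U : Type*} (A : PreviewAutomaton Q)
    (f : Q → X → U → Set X) (𝒰 : Controller Q X U) (q0 : Q) (N : ℕ∞)
    (t τ : ℕ → ℕ) (d : ℕ → Q) (q : ℕ → Q) (x : ℕ → X) : Prop :=
  ValidInput A q0 N t τ d ∧ IsExecution N t τ d q ∧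
  ∀ s : ℕ, x (s + 1) ∈ f (q s) (x s)
    (𝒰 s (fun i : Fin (s + 1) => (q i, x i)) (PreviewObs N t τ d s))

/-- `W` is a winning set with respect to mode `i`: some controller keeps every
closed-loop run starting from `(i, x0)` with `x0 ∈ W` safe (i.e. in `S_{q(t)}`
at every time `t`), over all valid preview input sequences and all
nondeterministic successors of the dynamics. -/
def IsWinningSet {Q X U : Type*} (A : PreviewAutomaton Q)
    (f : Q → X → U → Set X) (S : Q → Set X) (i : Q) (W : Set X) : Prop :=
  ∃ 𝒰 : Controller Q X U, ∀ x0 ∈ W, ∀ (N : ℕ∞) (t τ : ℕ → ℕ) (d : ℕ → Q)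
    (q : ℕ → Q) (x : ℕ → X), x 0 = x0 →
    IsClosedLoopRun A f 𝒰 i N t τ d q x → ∀ s : ℕ, x s ∈ S (q s)

/-- `W` is the maximal winning set with respect to mode `i`: it is a winning
set, and from every `x0 ∉ W`, for every controller, some closed-loop run is
unsafe. -/
def IsMaximalWinningSet {Q X U : Type*} (A : PreviewAutomaton Q)
    (f : Q → X → U → Set X) (S : Q → Set X) (i : Q) (W : Set X) : Prop :=
  IsWinningSet A f S i W ∧
  ∀ x0 ∉ W, ∀ 𝒰 : Controller Q X U, ∃ (N : ℕ∞) (t τ : ℕ → ℕ) (d : ℕ → Q)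
    (q : ℕ → Q) (x : ℕ → X), x 0 = x0 ∧
    IsClosedLoopRun A f 𝒰 i N t τ d q x ∧ ∃ s : ℕ, x s ∉ S (q s)

/-! A controller for `Ĝ` is turned into one for `G` by holding every preview `(t_k, τ_k, d_k)`
of `G` back until time `t_k + τ_k - min T(d_{k-1}, d_k)` and pass it on with the minimal preview
time. The resulting preview sequence is valid for `Ĝ`, has the same switching times
`t_k + τ_k`, hence the same execution, and only delays information. Conversely every valid
preview sequence of `Ĝ` is one of `G`, so a controller for `G` also wins for `Ĝ`. -/

namespace PreviewAutomaton

variable {Q X U : Type*}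

theorem sInf_T_mem (A : PreviewAutomaton Q) {q1 q2 : Q} (h : A.E q1 q2) :
    sInf (A.T q1 q2) ∈ A.T q1 q2 := by
  obtain ⟨t1, t2, h12, hT⟩ := A.T_interval q1 q2 h
  exact Nat.sInf_mem ⟨t1, by rw [hT]; exact ⟨le_rfl, h12⟩⟩

structure IsMinPreview (Ahat A : PreviewAutomaton Q) : Prop where
  E_eq : Ahat.E = A.E
  H_eq : Ahat.H = A.H
  T_eq : ∀ q1 q2, A.E q1 q2 → Ahat.T q1 q2 = {sInf (A.T q1 q2)}

theorem validInput_mono {A B : PreviewAutomaton Q} (hE : ∀ p q, B.E p q → A.E p q)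
    (hT : ∀ p q, B.E p q → B.T p q ⊆ A.T p q) (hH : ∀ q, A.H q ≤ B.H q)
    {q0 : Q} {N : ℕ∞} {t τ : ℕ → ℕ} {d : ℕ → Q} (hv : ValidInput B q0 N t τ d) :
    ValidInput A q0 N t τ d := by
  obtain ⟨ht0, hτ0, hd0, hstep⟩ := hv
  refine ⟨ht0, hτ0, hd0, fun k hk hkN => ?_⟩
  obtain ⟨hle, hEk, hTk, hHk⟩ := hstep k hk hkN
  exact ⟨hle, hE _ _ hEk, hT _ _ hEk hTk, (hH _).trans hHk⟩

theorem IsMinPreview.validInput {Ahat A : PreviewAutomaton Q} (hmin : Ahat.IsMinPreview A)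
    {q0 : Q} {N : ℕ∞} {t τ : ℕ → ℕ} {d : ℕ → Q} (hv : ValidInput Ahat q0 N t τ d) :
    ValidInput A q0 N t τ d := by
  refine validInput_mono (fun p q h => hmin.E_eq ▸ h) (fun p q h => ?_)
    (fun q => (congrFun hmin.H_eq q).ge) hv
  rw [hmin.E_eq] at h
  rw [hmin.T_eq p q h, Set.singleton_subset_iff]
  exact A.sInf_T_mem h

theorem isWinningSet_of_validInput_imp {A B : PreviewAutomaton Q} {f : Q → X → U → Set X}
    {S : Q → Set X} {i : Q} {W : Set X}
    (hBA : ∀ N t τ d, ValidInput B i N t τ d → ValidInput A i N t τ d)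
    (hW : IsWinningSet A f S i W) : IsWinningSet B f S i W := by
  obtain ⟨𝒰, h𝒰⟩ := hW
  exact ⟨𝒰, fun x0 hx0 N t τ d q x hx ⟨hv, hexec, hdyn⟩ =>
    h𝒰 x0 hx0 N t τ d q x hx ⟨hBA N t τ d hv, hexec, hdyn⟩⟩

noncomputable def minPreviewTime (A : PreviewAutomaton Q) (d : ℕ → Q) (k : ℕ) : ℕ :=
  if k = 0 then 0 else sInf (A.T (d (k - 1)) (d k))

noncomputable def delayedReceiptTime (A : PreviewAutomaton Q) (t τ : ℕ → ℕ) (d : ℕ → Q)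
    (k : ℕ) : ℕ :=
  t k + τ k - A.minPreviewTime d k

section DelayedInput

variable {A : PreviewAutomaton Q} {q0 : Q} {N : ℕ∞} {t τ : ℕ → ℕ} {d : ℕ → Q}

theorem minPreviewTime_le (hv : ValidInput A q0 N t τ d) {k : ℕ} (hkN : (k : ℕ∞) ≤ N) :
    A.minPreviewTime d k ≤ τ k := by
  unfold minPreviewTime
  split_ifs with hk
  · exact Nat.zero_le _
  · exact Nat.sInf_le (hv.2.2.2 k (Nat.one_le_iff_ne_zero.mpr hk) hkN).2.2.1

theorem delayedReceiptTime_add_minPreviewTime (hv : ValidInput A q0 N t τ d) {k : ℕ}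
    (hkN : (k : ℕ∞) ≤ N) : A.delayedReceiptTime t τ d k + A.minPreviewTime d k = t k + τ k := by
  have := minPreviewTime_le hv hkN
  unfold delayedReceiptTime
  omega

theorem le_delayedReceiptTime (hv : ValidInput A q0 N t τ d) {k : ℕ} (hkN : (k : ℕ∞) ≤ N) :
    t k ≤ A.delayedReceiptTime t τ d k := by
  have := minPreviewTime_le hv hkN
  unfold delayedReceiptTime
  omega

theorem IsMinPreview.validInput_delayed {Ahat : PreviewAutomaton Q} (hmin : Ahat.IsMinPreview A)
    (hv : ValidInput A q0 N t τ d) :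
    ValidInput Ahat q0 N (A.delayedReceiptTime t τ d) (A.minPreviewTime d) d := by
  refine ⟨by simp [delayedReceiptTime, minPreviewTime, hv.1, hv.2.1], by simp [minPreviewTime],
    hv.2.2.1, fun k hk hkN => ?_⟩
  obtain ⟨hle, hEk, -, hHk⟩ := hv.2.2.2 k hk hkN
  have hkN' : ((k - 1 : ℕ) : ℕ∞) ≤ N := (Nat.cast_le.mpr (Nat.sub_le k 1)).trans hkN
  rw [delayedReceiptTime_add_minPreviewTime hv hkN, delayedReceiptTime_add_minPreviewTime hv hkN',
    hmin.E_eq, hmin.H_eq, hmin.T_eq _ _ hEk]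
  refine ⟨hle.trans (le_delayedReceiptTime hv hkN), hEk, ?_, hHk⟩
  simp [minPreviewTime, Nat.one_le_iff_ne_zero.mp hk]

end DelayedInput

theorem isExecution_of_add_eq {N : ℕ∞} {t τ t' τ' : ℕ → ℕ} {d q : ℕ → Q}
    (h : ∀ k : ℕ, (k : ℕ∞) ≤ N → t' k + τ' k = t k + τ k) (hex : IsExecution N t τ d q) :
    IsExecution N t' τ' d q := by
  intro s k hkN hle hlt
  refine hex s k hkN (h k hkN ▸ hle) fun hk1 => ?_
  rw [← h (k + 1) (by exact_mod_cast hk1)]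
  exact hlt hk1

theorem previewObs_of_le {N : ℕ∞} {t τ : ℕ → ℕ} {d : ℕ → Q} {s k : ℕ} (hk : 1 ≤ k)
    (hkN : (k : ℕ∞) ≤ N) (hts : t k ≤ s) : PreviewObs N t τ d s k = some (t k, τ k, d k) :=
  if_pos ⟨hk, hkN, hts⟩

/-- The node `d_{k-1}` is read off the `(k-1)`-th preview, which is received no later than the
`k`-th one (so the fallback of `getD` is never used). -/
noncomputable def delayObs (A : PreviewAutomaton Q) (q0 : Q) (s : ℕ)
    (obs : ℕ → Option (ℕ × ℕ × Q)) (k : ℕ) : Option (ℕ × ℕ × Q) :=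
  (obs k).bind fun p =>
    let prev := if k = 1 then q0 else ((obs (k - 1)).map (·.2.2)).getD p.2.2
    let m := sInf (A.T prev p.2.2)
    if p.1 + p.2.1 - m ≤ s then some (p.1 + p.2.1 - m, m, p.2.2) else none

theorem delayObs_previewObs {A : PreviewAutomaton Q} {q0 : Q} {N : ℕ∞} {t τ : ℕ → ℕ}
    {d : ℕ → Q} (hv : ValidInput A q0 N t τ d) (s : ℕ) :
    A.delayObs q0 s (PreviewObs N t τ d s) =
      PreviewObs N (A.delayedReceiptTime t τ d) (A.minPreviewTime d) d s := by
  funext k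
  by_cases hc : 1 ≤ k ∧ (k : ℕ∞) ≤ N ∧ t k ≤ s
  · obtain ⟨hk, hkN, hts⟩ := hc
    have hprev : (if k = 1 then q0
        else ((PreviewObs N t τ d s (k - 1)).map (·.2.2)).getD (d k)) = d (k - 1) := by
      split_ifs with hk1
      · subst hk1
        exact hv.2.2.1.symm
      · have hts' : t (k - 1) ≤ s :=
          (Nat.le_add_right _ _).trans ((hv.2.2.2 k hk hkN).1.trans hts)
        have hkN' : ((k - 1 : ℕ) : ℕ∞) ≤ N := (Nat.cast_le.mpr (Nat.sub_le k 1)).trans hkN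
        rw [previewObs_of_le (by omega) hkN' hts']
        rfl
    have hm : sInf (A.T (d (k - 1)) (d k)) = A.minPreviewTime d k := by
      simp [minPreviewTime, Nat.one_le_iff_ne_zero.mp hk]
    simp only [delayObs, previewObs_of_le hk hkN hts, Option.bind_some, hprev, hm]
    simp [PreviewObs, delayedReceiptTime, hk, hkN]
  · have hobs : PreviewObs N t τ d s k = none := if_neg hc
    have hobs' : PreviewObs N (A.delayedReceiptTime t τ d) (A.minPreviewTime d) d s k = none :=
      if_neg fun ⟨hk, hkN, hts⟩ => hc ⟨hk, hkN, (le_delayedReceiptTime hv hkN).trans hts⟩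
    rw [delayObs, hobs, hobs', Option.bind_none]

noncomputable def delayController (A : PreviewAutomaton Q) (q0 : Q) (𝒰 : Controller Q X U) :
    Controller Q X U :=
  fun s hist obs => 𝒰 s hist (A.delayObs q0 s obs)

variable {Ahat A : PreviewAutomaton Q} {f : Q → X → U → Set X}

theorem IsMinPreview.isClosedLoopRun_delayed (hmin : Ahat.IsMinPreview A)
    {𝒰 : Controller Q X U} {q0 : Q} {N : ℕ∞} {t τ : ℕ → ℕ} {d q : ℕ → Q} {x : ℕ → X}
    (hrun : IsClosedLoopRun A f (A.delayController q0 𝒰) q0 N t τ d q x) :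
    IsClosedLoopRun Ahat f 𝒰 q0 N (A.delayedReceiptTime t τ d) (A.minPreviewTime d) d q x := by
  obtain ⟨hv, hexec, hdyn⟩ := hrun
  refine ⟨hmin.validInput_delayed hv,
    isExecution_of_add_eq (fun k hkN => delayedReceiptTime_add_minPreviewTime hv hkN) hexec,
    fun s => ?_⟩
  rw [← delayObs_previewObs hv]
  exact hdyn s

theorem IsMinPreview.isWinningSet_min (hmin : Ahat.IsMinPreview A) {S : Q → Set X} {i : Q}
    {W : Set X} (hW : IsWinningSet A f S i W) : IsWinningSet Ahat f S i W :=
  isWinningSet_of_validInput_imp (fun _ _ _ _ => hmin.validInput) hW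

theorem IsMinPreview.isWinningSet_of_min (hmin : Ahat.IsMinPreview A) {S : Q → Set X} {i : Q}
    {W : Set X} (hW : IsWinningSet Ahat f S i W) : IsWinningSet A f S i W := by
  obtain ⟨𝒰, h𝒰⟩ := hW
  exact ⟨A.delayController i 𝒰, fun x0 hx0 N t τ d q x hx hrun =>
    h𝒰 x0 hx0 N _ _ d q x hx (hmin.isClosedLoopRun_delayed hrun)⟩

end PreviewAutomaton

/-- Theorem 1: let `G = (Q,E,T,H)` and `Ĝ = (Q,E,T̂,H)` be two
preview automata for the same switched system, where
`T̂(q1,q2) = {min(T(q1,q2))}`. Then, given a safety specification `(S_i)`,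
`(W_i)_{i ∈ Q}` is a winning set with respect to `G` iff it is a winning set
with respect to `Ĝ`. -/
theorem winning_iff_min_preview {Q X U : Type*}
    (A Ahat : PreviewAutomaton Q) (f : Q → X → U → Set X)
    (S : Q → Set X) (W : Q → Set X)
    (hE : Ahat.E = A.E) (hH : Ahat.H = A.H)
    (hT : ∀ q1 q2, A.E q1 q2 → Ahat.T q1 q2 = {sInf (A.T q1 q2)}) :
    (∀ i, IsWinningSet A f S i (W i)) ↔ (∀ i, IsWinningSet Ahat f S i (W i)) := by
  have hmin : Ahat.IsMinPreview A := ⟨hE, hH, hT⟩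
  exact ⟨fun h i => hmin.isWinningSet_min (h i), fun h i => hmin.isWinningSet_of_min (h i)⟩
end

section
/- Let G = (Q, E, T, H) and Ĝ = (Q, E, T̂, H) be two preview automata with T̂(q1,q2) = min(T(q1,q2)) for every transition (q1,q2) ∈ E. Suppose (t_k, τ_k, d_k)_{k=1}^N is a valid preview input sequence of G and (t'_k, τ'_k, d_k)_{k=1}^N is a valid preview input sequence of Ĝ, both from the same initial node q0, having the same execution. Then for all 1 ≤ k ≤ N: τ'_k = min(T(d_{k−1}, d_k)), t'_k + τ'_k = t_k + τ_k, and consequently τ'_k ≤ τ_k and t'_k ≥ t_k. In particular, for every transition, the preview input in G occurs no later than the corresponding preview input in Ĝ. -/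
open scoped Classical

/-- let `Ĝ = (Q,E,T̂,H)` be obtained from `G = (Q,E,T,H)` by
`T̂(q1,q2) = {min(T(q1,q2))}`. If `(t_k, τ_k, d_k)` is a valid preview input
sequence of `G` and `(t'_k, τ'_k, d_k)` is a valid preview input sequence of
`Ĝ`, both from the same initial node and with the same execution, then for all
`1 ≤ k ≤ N`: `τ'_k = min(T(d_{k−1}, d_k))`, `t'_k + τ'_k = t_k + τ_k`,
`τ'_k ≤ τ_k` and `t_k ≤ t'_k` (every preview in `G` occurs no later than the
corresponding preview in `Ĝ`). -/
theorem preview_earlier_of_min {Q : Type*}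
    (A Ahat : PreviewAutomaton Q)
    (hE : Ahat.E = A.E) (hH : Ahat.H = A.H)
    (hT : ∀ q1 q2, A.E q1 q2 → Ahat.T q1 q2 = {sInf (A.T q1 q2)})
    (q0 : Q) (N : ℕ∞) (t τ t' τ' : ℕ → ℕ) (d : ℕ → Q)
    (hG : ValidInput A q0 N t τ d) (hGhat : ValidInput Ahat q0 N t' τ' d)
    (qe : ℕ → Q) (hqe : IsExecution N t τ d qe)
    (hqe' : IsExecution N t' τ' d qe) :
    ∀ k : ℕ, 1 ≤ k → (k : ℕ∞) ≤ N →
      τ' k = sInf (A.T (d (k - 1)) (d k)) ∧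
      t' k + τ' k = t k + τ k ∧ τ' k ≤ τ k ∧ t k ≤ t' k := by
  obtain ⟨ht0, hτ0, hd0, hstep⟩ := hG
  obtain ⟨ht0', hτ0', hd0', hstep'⟩ := hGhat
  have grow : ∀ k : ℕ, 1 ≤ k → (k : ℕ∞) ≤ N →
      t (k - 1) + τ (k - 1) + 2 ≤ t k + τ k := by
    intro k hk1 hkN
    obtain ⟨h1, h2, h3, h4⟩ := hstep k hk1 hkN
    have h5 : (1 : ℕ∞) ≤ ((t k + τ k - 1 - (t (k - 1) + τ (k - 1)) : ℕ) : ℕ∞) :=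
      le_trans (A.H_pos _) h4
    have h6 : 1 ≤ t k + τ k - 1 - (t (k - 1) + τ (k - 1)) := by exact_mod_cast h5
    omega
  have grow' : ∀ k : ℕ, 1 ≤ k → (k : ℕ∞) ≤ N →
      t' (k - 1) + τ' (k - 1) + 2 ≤ t' k + τ' k := by
    intro k hk1 hkN
    obtain ⟨h1, h2, h3, h4⟩ := hstep' k hk1 hkN
    have h5 : (1 : ℕ∞) ≤ ((t' k + τ' k - 1 - (t' (k - 1) + τ' (k - 1)) : ℕ) : ℕ∞) :=
      le_trans (Ahat.H_pos _) h4
    have h6 : 1 ≤ t' k + τ' k - 1 - (t' (k - 1) + τ' (k - 1)) := by exact_mod_cast h5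
    omega
  have key : ∀ k : ℕ, (k : ℕ∞) ≤ N → t' k + τ' k = t k + τ k := by
    intro k
    induction k using Nat.strong_induction_on with
    | _ k ih =>
      match k with
      | 0 => intro _; simp [ht0, hτ0, ht0', hτ0']
      | m + 1 =>
        intro hkN
        have hmN : (m : ℕ∞) ≤ N := le_trans (by exact_mod_cast Nat.le_succ m) hkN
        have ihm : t' m + τ' m = t m + τ m := ih m (Nat.lt_succ_self m) hmN
        have hE1 : A.E (d m) (d (m + 1)) := by
          have := (hstep (m + 1) (by omega) hkN).2.1
          simpa using this
        have hgrow := grow (m + 1) (by omega) hkN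
        have hgrow' := grow' (m + 1) (by omega) hkN
        simp only [Nat.add_sub_cancel] at hgrow hgrow'
        rcases lt_trichotomy (t (m + 1) + τ (m + 1)) (t' (m + 1) + τ' (m + 1)) with h | h | h
        · exfalso
          have e1 : qe (t (m + 1) + τ (m + 1)) = d (m + 1) := by
            apply hqe _ (m + 1) hkN le_rfl
            intro hN2
            have hN2' : ((m + 2 : ℕ) : ℕ∞) ≤ N := by push_cast at hN2 ⊢; exact hN2
            have hg2 := grow (m + 2) (by omega) hN2'
            simp only [show m + 2 - 1 = m + 1 from rfl] at hg2
            show t (m + 1) + τ (m + 1) < t (m + 2) + τ (m + 2)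
            omega
          have e2 : qe (t (m + 1) + τ (m + 1)) = d m := by
            apply hqe' _ m hmN (by omega)
            intro _
            simpa using h
          have hdd : d m = d (m + 1) := e2.symm.trans e1
          exact A.no_self_loop (d (m + 1)) (hdd ▸ hE1)
        · exact h.symm
        · exfalso
          have e1 : qe (t' (m + 1) + τ' (m + 1)) = d (m + 1) := by
            apply hqe' _ (m + 1) hkN le_rfl
            intro hN2
            have hN2' : ((m + 2 : ℕ) : ℕ∞) ≤ N := by push_cast at hN2 ⊢; exact hN2
            have hg2 := grow' (m + 2) (by omega) hN2'
            simp only [show m + 2 - 1 = m + 1 from rfl] at hg2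
            show t' (m + 1) + τ' (m + 1) < t' (m + 2) + τ' (m + 2)
            omega
          have e2 : qe (t' (m + 1) + τ' (m + 1)) = d m := by
            apply hqe _ m hmN (by omega)
            intro _
            simpa using h
          have hdd : d m = d (m + 1) := e2.symm.trans e1
          exact A.no_self_loop (d (m + 1)) (hdd ▸ hE1)
  intro k hk1 hkN
  obtain ⟨h1, h2, h3, h4⟩ := hstep k hk1 hkN
  obtain ⟨h1', h2', h3', h4'⟩ := hstep' k hk1 hkN
  have hEk : A.E (d (k - 1)) (d k) := h2
  have hτ'eq : τ' k = sInf (A.T (d (k - 1)) (d k)) := by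
    have := h3'
    rw [hT _ _ hEk] at this
    simpa using this
  have hinf_le : sInf (A.T (d (k - 1)) (d k)) ≤ τ k := Nat.sInf_le h3
  have heq := key k hkN
  refine ⟨hτ'eq, heq, ?_, ?_⟩ <;> omega
end
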